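/- Let ν be a formal power series in y and for each rooted tree A define ν_A recursively: if A is the grafting of subtrees A_1,...,A_k on a root, then ν_A = ν_{A_1}···ν_{A_k} · ν^{(k)}. Then for all rooted trees A, B: ν_{A←B} = (ν_A)' · ν_B, where A←B = Σ_{s∈A} A←_s B. -/
import Mathlib


/-- Rooted trees in planar representation: a root with an ordered list of
subtrees (rooted trees are obtained by forgetting the order, see `TIso`). -/
inductive PTree where
  | node : List PTree → PTree

mutual
/-- Number of vertices of a tree. -/
def nverts : PTree → ℕ
  | .node cs => 1 + nvertsL cs
def nvertsL : List PTree → ℕ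
  | [] => 0
  | c :: cs => nverts c + nvertsL cs
end

mutual
/-- All trees `A ←ₛ B` obtained by attaching the root of `B` by a new edge to
some vertex `s` of `A` (listed once for each vertex `s` of `A`). -/
def graftAll : PTree → PTree → List PTree
  | .node cs, B => .node (B :: cs) :: (graftAllL cs B).map PTree.node
def graftAllL : List PTree → PTree → List (List PTree)
  | [], _ => []
  | c :: cs, B => (graftAll c B).map (· :: cs) ++ (graftAllL cs B).map (c :: ·)
end

open PowerSeries

mutual
/-- The series `ν_A` attached to a rooted tree `A`: if `A` is the grafting of the
subtrees `A₁,…,A_k` on a root, then `ν_A = ν_{A₁} ⋯ ν_{A_k} · ν⁽ᵏ⁾`. -/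
noncomputable def nuT (ν : PowerSeries ℚ) : PTree → PowerSeries ℚ
  | .node cs => nuL ν cs * ((PowerSeries.derivative ℚ)^[cs.length] ν)
noncomputable def nuL (ν : PowerSeries ℚ) : List PTree → PowerSeries ℚ
  | [] => 1
  | c :: cs => nuT ν c * nuL ν cs
end

theorem graftAllL_length (B : PTree) : ∀ (cs : List PTree), ∀ l ∈ graftAllL cs B, l.length = cs.length := by
  intro cs
  induction cs with
  | nil => simp [graftAllL]
  | cons c cs ih =>
    intro l hl
    simp only [graftAllL, List.mem_append, List.mem_map] at hl
    rcases hl with ⟨t, _, rfl⟩ | ⟨l', hl', rfl⟩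
    · simp
    · simp [ih l' hl']

mutual
theorem nuT_graft (ν : PowerSeries ℚ) : ∀ (A B : PTree),
    ((graftAll A B).map (nuT ν)).sum = PowerSeries.derivative ℚ (nuT ν A) * nuT ν B
  | .node cs, B => by
    have hL := nuL_graft ν cs B
    have hmap : ((graftAllL cs B).map PTree.node).map (nuT ν)
        = (graftAllL cs B).map (fun l => nuL ν l * ((PowerSeries.derivative ℚ)^[cs.length] ν)) := by
      rw [List.map_map]
      refine List.map_congr_left ?_
      intro l hl
      simp [nuT, graftAllL_length B cs l hl]
    have hsum : ((graftAllL cs B).map (fun l => nuL ν l * ((PowerSeries.derivative ℚ)^[cs.length] ν))).sum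
        = ((graftAllL cs B).map (nuL ν)).sum * ((PowerSeries.derivative ℚ)^[cs.length] ν) := by
      induction graftAllL cs B with
      | nil => simp
      | cons x xs ih => simp [ih, add_mul]
    simp only [graftAll, List.map_cons, List.sum_cons, hmap, hsum, hL, nuT, nuL,
      Function.iterate_succ', Function.comp_apply, map_mul, List.length_cons,
      Derivation.leibniz, smul_eq_mul]
    ring
theorem nuL_graft (ν : PowerSeries ℚ) : ∀ (cs : List PTree) (B : PTree),
    ((graftAllL cs B).map (nuL ν)).sum = PowerSeries.derivative ℚ (nuL ν cs) * nuT ν B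
  | [], B => by simp [graftAllL, nuL]
  | c :: cs, B => by
    have h1 := nuT_graft ν c B
    have h2 := nuL_graft ν cs B
    have e1 : ((graftAll c B).map (· :: cs)).map (nuL ν)
        = (graftAll c B).map (fun t => nuT ν t * nuL ν cs) := by
      rw [List.map_map]; rfl
    have e2 : ((graftAllL cs B).map (c :: ·)).map (nuL ν)
        = (graftAllL cs B).map (fun l => nuT ν c * nuL ν l) := by
      rw [List.map_map]; rfl
    have s1 : ((graftAll c B).map (fun t => nuT ν t * nuL ν cs)).sum
        = ((graftAll c B).map (nuT ν)).sum * nuL ν cs := by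
      induction graftAll c B with
      | nil => simp
      | cons x xs ih => simp [ih, add_mul]
    have s2 : ((graftAllL cs B).map (fun l => nuT ν c * nuL ν l)).sum
        = nuT ν c * ((graftAllL cs B).map (nuL ν)).sum := by
      induction graftAllL cs B with
      | nil => simp
      | cons x xs ih => simp [ih, mul_add]
    simp only [graftAllL, List.map_append, List.sum_append, e1, e2, s1, s2, h1, h2, nuL, map_mul, Derivation.leibniz, smul_eq_mul]
    ring
end


/-- `ν_{A ← B} = (ν_A)' · ν_B`, where `A ← B = Σ_{s ∈ A} A ←ₛ B` and the
assignment `A ↦ ν_A` is extended linearly to sums of trees. -/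
theorem nu_preLie (ν : PowerSeries ℚ) (A B : PTree) :
    ((graftAll A B).map (nuT ν)).sum =
      PowerSeries.derivative ℚ (nuT ν A) * nuT ν B :=
  nuT_graft ν A B
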